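/- Let R be a commutative semi-local unitary ring (finitely many maximal ideals). Then the Erdős-Burgess constant of the multiplicative semigroup of R is finite if and only if R is finite. -/

import Mathlib

/-- Product of the nonempty list `a :: l` in a semigroup. -/
def sprod {α : Type*} [Mul α] (a : α) (l : List α) : α := l.foldl (· * ·) a

/-- A list is idempotent-product free if no nonempty sublist has idempotent product. -/
def IdemProdFree {α : Type*} [Mul α] (l : List α) : Prop :=
  ∀ (a : α) (t : List α), (a :: t).Sublist l → ¬ IsIdempotentElem (sprod a t)

/-- The Erdős–Burgess constant of a (commutative) semigroup, as an extended natural: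
the supremum of `|T| + 1` over all idempotent-product free sequences `T`. -/
noncomputable def EB (α : Type*) [Mul α] : ℕ∞ :=
  ⨆ l ∈ {l : List α | IdemProdFree l}, ((l.length : ℕ∞) + 1)

/-!
A finite monoid `M` has `EB M ≤ |M|`: appending a letter to an idempotent-product free
sequence strictly enlarges its set of subsequence products, since otherwise this set, which
contains `1`, would be stable under multiplication by the new letter and would therefore
contain every power of it, in particular an idempotent one.

Conversely, if a monoid has infinitely many units, a sequence of units avoiding idempotent
(that is, trivial) subsequence products can be extended forever, since at each step only
finitely many units are forbidden; such sequences lift along surjections. An infinite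
semilocal ring either has an infinite Jacobson radical `J`, whose elements `1 + j` are units,
or has an infinite residue field, because `R ⧸ J` embeds into the product of its finitely
many residue fields.
-/

section Monoid

variable {M N F : Type*}

lemma sprod_eq_mul_prod [Monoid M] (a : M) (l : List M) : sprod a l = a * l.prod := by
  induction l generalizing a with
  | nil => simp [sprod]
  | cons b t ih => rw [sprod, List.foldl_cons, ← sprod, ih, List.prod_cons, mul_assoc]

lemma map_sprod [Mul M] [Mul N] [FunLike F M N] [MulHomClass F M N] (f : F) (a : M) (l : List M) :
    f (sprod a l) = sprod (f a) (l.map f) := by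
  induction l generalizing a with
  | nil => rfl
  | cons b t ih => exact (ih (a * b)).trans (by rw [map_mul]; rfl)

def subprods [Monoid M] (l : List M) : Set M :=
  {x | ∃ s : List M, s.Sublist l ∧ s.prod = x}

lemma subprods_nil [Monoid M] : subprods ([] : List M) = {1} := by
  ext; simp [subprods, eq_comm]

lemma subprods_cons [Monoid M] (x : M) (l : List M) :
    subprods (x :: l) = subprods l ∪ (x * ·) '' subprods l := by
  ext y
  simp only [subprods, List.sublist_cons_iff, Set.mem_union, Set.mem_image, Set.mem_ofPred_eq]
  constructor
  · rintro ⟨s, hs | ⟨r, rfl, hr⟩, rfl⟩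
    · exact .inl ⟨s, hs, rfl⟩
    · exact .inr ⟨r.prod, ⟨r, hr, rfl⟩, List.prod_cons.symm⟩
  · rintro (⟨s, hs, rfl⟩ | ⟨_, ⟨r, hr, rfl⟩, rfl⟩)
    · exact ⟨s, .inl hs, rfl⟩
    · exact ⟨x :: r, .inr ⟨r, rfl, hr⟩, List.prod_cons⟩

lemma subprods_finite [Monoid M] (l : List M) : (subprods l).Finite :=
  (l.sublists.finite_toSet.image List.prod).subset
    fun _ ⟨s, hs, hx⟩ => ⟨s, List.mem_sublists.mpr hs, hx⟩

lemma idemProdFree_nil [Mul M] : IdemProdFree ([] : List M) :=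
  fun _ _ h => by simp at h

lemma idemProdFree_cons_iff [Monoid M] {x : M} {l : List M} :
    IdemProdFree (x :: l) ↔
      IdemProdFree l ∧ ∀ y ∈ subprods l, ¬ IsIdempotentElem (x * y) := by
  simp only [IdemProdFree, subprods, List.sublist_cons_iff, List.cons.injEq, Set.mem_ofPred_eq]
  constructor
  · intro h
    refine ⟨fun a t ht => h a t (.inl ht), ?_⟩
    rintro _ ⟨t, ht, rfl⟩
    simpa [sprod_eq_mul_prod] using h x t (.inr ⟨t, ⟨rfl, rfl⟩, ht⟩)
  · rintro ⟨hl, hx⟩ a t (ht | ⟨r, ⟨rfl, rfl⟩, hr⟩)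
    · exact hl a t ht
    · simpa [sprod_eq_mul_prod] using hx _ ⟨t, hr, rfl⟩

lemma IdemProdFree.of_map [Mul M] [Mul N] [FunLike F M N] [MulHomClass F M N] (f : F) {l : List M}
    (h : IdemProdFree (l.map f)) : IdemProdFree l := fun a t ht hidem =>
  h (f a) (t.map f) (by simpa using ht.map f) (map_sprod f a t ▸ hidem.map f)

lemma exists_isIdempotentElem_pow [Monoid M] [Finite M] (x : M) :
    ∃ n ≠ 0, IsIdempotentElem (x ^ n) := by
  obtain ⟨i, j, hij, hpow⟩ := Finite.exists_ne_map_eq_of_infinite (x ^ · : ℕ → M)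
  wlog hlt : i < j generalizing i j
  · exact this j i hij.symm hpow.symm (by omega)
  obtain ⟨p, rfl⟩ := Nat.exists_eq_add_of_lt hlt
  have periodic : ∀ k, x ^ (i + k * (p + 1)) = x ^ i := by
    intro k
    induction k with
    | zero => simp
    | succ k ih => rw [add_mul, one_mul, ← add_assoc, pow_add, ih, ← pow_add, hpow, add_assoc]
  -- a multiple of the period that is at least `i`
  refine ⟨(i + 1) * (p + 1), by positivity, ?_⟩
  obtain ⟨m, hm⟩ : ∃ m, (i + 1) * (p + 1) = m + i := Nat.exists_eq_add_of_le' (by nlinarith)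
  rw [IsIdempotentElem, ← pow_add]
  nth_rw 1 [hm]
  rw [add_assoc, pow_add, periodic, ← pow_add, hm]

lemma IdemProdFree.length_lt_ncard_subprods [Monoid M] [Finite M] {l : List M}
    (h : IdemProdFree l) : l.length < (subprods l).ncard := by
  induction l with
  | nil => simp [subprods_nil]
  | cons x l ih =>
    obtain ⟨hl, hx⟩ := idemProdFree_cons_iff.mp h
    suffices subprods l ⊂ subprods (x :: l) from
      (Nat.succ_le_of_lt (ih hl)).trans_lt (Set.ncard_lt_ncard this (Set.toFinite _))
    rw [subprods_cons, Set.ssubset_union_left_iff]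
    intro hstable
    have pow_mem : ∀ n, x ^ n ∈ subprods l := by
      intro n
      induction n with
      | zero => exact ⟨[], List.nil_sublist l, by simp⟩
      | succ n ih => exact pow_succ' x n ▸ hstable ⟨_, ih, rfl⟩
    obtain ⟨n, hn, hidem⟩ := exists_isIdempotentElem_pow x
    obtain ⟨k, rfl⟩ := Nat.exists_eq_succ_of_ne_zero hn
    exact hx _ (pow_mem k) (pow_succ' x k ▸ hidem)

lemma EB_le_card [Monoid M] [Finite M] : EB M ≤ Nat.card M := by
  refine iSup₂_le fun l hl => ?_
  have := (IdemProdFree.length_lt_ncard_subprods hl).trans_le (Set.ncard_le_card _)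
  exact_mod_cast this

lemma IdemProdFree.length_add_one_le_EB [Mul M] {l : List M} (h : IdemProdFree l) :
    l.length + 1 ≤ EB M :=
  le_iSup₂ (f := fun l (_ : l ∈ {l : List M | IdemProdFree l}) => (l.length : ℕ∞) + 1) l h

lemma EB_eq_top_of_forall_exists [Mul M]
    (h : ∀ n : ℕ, ∃ l : List M, l.length = n ∧ IdemProdFree l) : EB M = ⊤ := by
  refine ENat.eq_top_iff_forall_ge.mpr fun n => ?_
  obtain ⟨l, rfl, hl⟩ := h n
  exact le_self_add.trans (IdemProdFree.length_add_one_le_EB hl)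

lemma EB_le_of_surjective [Mul M] [Mul N] [FunLike F M N] [MulHomClass F M N] (f : F)
    (hf : Function.Surjective f) :
    EB N ≤ EB M := by
  refine iSup₂_le fun l hl => ?_
  obtain ⟨l', rfl⟩ : ∃ l', l'.map f = l :=
    ⟨l.map (Function.surjInv hf), by simp [Function.comp_def, Function.surjInv_eq hf]⟩
  simpa using (IdemProdFree.of_map f hl).length_add_one_le_EB

lemma exists_idemProdFree_of_infinite_units [Monoid M] [Infinite Mˣ] (n : ℕ) :
    ∃ l : List M, l.length = n ∧ (∀ x ∈ l, IsUnit x) ∧ IdemProdFree l := by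
  induction n with
  | zero => exact ⟨[], rfl, by simp, idemProdFree_nil⟩
  | succ n ih =>
    obtain ⟨l, hlen, hunits, hl⟩ := ih
    have forbidden : {u : Mˣ | ((u⁻¹ : Mˣ) : M) ∈ subprods l}.Finite :=
      (subprods_finite l).preimage ((Units.val_injective.comp inv_injective).injOn)
    obtain ⟨u, hu⟩ := forbidden.exists_notMem
    refine ⟨u :: l, by simp [hlen], by simpa using hunits,
      idemProdFree_cons_iff.mpr ⟨hl, ?_⟩⟩
    rintro _ ⟨s, hs, rfl⟩ hidem
    have hunit : IsUnit (u * s.prod) :=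
      u.isUnit.mul (List.prod_isUnit fun x hx => hunits x (hs.subset hx))
    have hinv : ((u⁻¹ : Mˣ) : M) = s.prod :=
      Units.inv_eq_of_mul_eq_one_right ((IsIdempotentElem.iff_eq_one_of_isUnit hunit).mp hidem)
    exact hu (by rw [Set.mem_ofPred_eq, hinv]; exact ⟨s, hs, rfl⟩)

lemma EB_eq_top_of_infinite_units [Monoid M] [Infinite Mˣ] : EB M = ⊤ :=
  EB_eq_top_of_forall_exists fun n =>
    (exists_idemProdFree_of_infinite_units n).imp fun _ h => ⟨h.1, h.2.2⟩

end Monoid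

section Ring

variable {R : Type*} [CommRing R]

lemma infinite_units_of_infinite_jacobson (h : Infinite ((⊥ : Ideal R).jacobson)) :
    Infinite Rˣ := by
  have isUnit_one_add (j : (⊥ : Ideal R).jacobson) : IsUnit (1 + (j : R)) := by
    simpa [add_comm] using Ideal.mem_jacobson_bot.mp j.2 1
  exact .of_injective (fun j => (isUnit_one_add j).unit) fun i j hij =>
    Subtype.ext (add_left_cancel (congrArg Units.val hij))

lemma finite_of_finite_jacobson_of_finite_residue (hsl : {M : Ideal R | M.IsMaximal}.Finite)
    [Finite ((⊥ : Ideal R).jacobson)]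
    (hres : ∀ M : Ideal R, M.IsMaximal → Finite (R ⧸ M)) : Finite R := by
  have : Finite {M : Ideal R | M.IsMaximal} := hsl
  have : ∀ M : {M : Ideal R | M.IsMaximal}, Finite (R ⧸ (M : Ideal R)) := fun M => hres M M.2
  have hJ : (⊥ : Ideal R).jacobson = ⨅ M : {M : Ideal R | M.IsMaximal}, (M : Ideal R) := by
    simp [Ideal.jacobson, sInf_eq_iInf']
  have : Finite (R ⧸ (⊥ : Ideal R).jacobson) := by
    rw [hJ]
    exact .of_injective _ (Ideal.quotientInfToPiQuotient_inj _)
  exact .of_ideal_quotient (⊥ : Ideal R).jacobson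

lemma infinite_units_of_infinite_field {K : Type*} [DivisionRing K] [Infinite K] : Infinite Kˣ :=
  have : Infinite {a : K // a ≠ 0} := (Set.finite_singleton 0).infinite_compl.to_subtype
  .of_injective _ unitsEquivNeZero.symm.injective

lemma EB_eq_top_of_infinite (hsl : {M : Ideal R | M.IsMaximal}.Finite) [Infinite R] :
    EB R = ⊤ := by
  by_cases hJ : Infinite ((⊥ : Ideal R).jacobson)
  · have := infinite_units_of_infinite_jacobson hJ
    exact EB_eq_top_of_infinite_units
  have : Finite ((⊥ : Ideal R).jacobson) := not_infinite_iff_finite.mp hJ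
  obtain ⟨m, hm, hinf⟩ : ∃ m : Ideal R, m.IsMaximal ∧ Infinite (R ⧸ m) := by
    by_contra! hres
    have := finite_of_finite_jacobson_of_finite_residue hsl hres
    exact not_finite R
  let := Ideal.Quotient.field m
  have := infinite_units_of_infinite_field (K := R ⧸ m)
  exact eq_top_mono (EB_le_of_surjective (Ideal.Quotient.mk m) Ideal.Quotient.mk_surjective)
    EB_eq_top_of_infinite_units

end Ring

theorem stmt_18 (R : Type*) [CommRing R] (hsl : {M : Ideal R | M.IsMaximal}.Finite) :
    EB R ≠ ⊤ ↔ Finite R := by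
  refine ⟨fun h => ?_, fun _ => (EB_le_card.trans_lt (ENat.natCast_lt_top _)).ne⟩
  by_contra hfin
  have : Infinite R := not_finite_iff_infinite.mp hfin
  exact h (EB_eq_top_of_infinite hsl)
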